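/- Let n ≥ 2, let N be a large integer, and let E₁,…,Eₙ ⊂ ℝ have finite measure with |Eₙ| = 1. Let C₀ > 0 and set E′ₙ = {x ∈ Eₙ : Mχ_{Eᵢ}(x) < C₀|Eᵢ| for all 1 ≤ i ≤ n}, E′ᵢ = Eᵢ for 1 ≤ i ≤ n−1, and assume |E′ₙ| ≥ 1/2 (which holds for C₀ sufficiently large, by the Hardy–Littlewood maximal inequality). For each bounded interval I and 1 ≤ i ≤ n, set λᵢ(I) = (1/(|I||E′ᵢ|)) ∫_{E′ᵢ} χ̃_I^N. Then for every bounded interval I, λₙ(I) ≤ C·(1 + λ₁(I) + ⋯ + λ_{n−1}(I))^{1−N}, where C depends only on n, N and C₀. -/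

import Mathlib

open MeasureTheory Real Complex
open scoped FourierTransform ENNReal NNReal Classical
noncomputable section

structure Iv where
  l : ℝ
  len : ℝ

def Iv.set (I : Iv) : Set ℝ := Set.Ioo I.l (I.l + I.len)

def Iv.dil (c : ℝ) (I : Iv) : Set ℝ :=
  Set.Ioo (I.l + I.len / 2 - c * I.len / 2) (I.l + I.len / 2 + c * I.len / 2)

def Iv.chi (I : Iv) (x : ℝ) : ℝ := (1 + Metric.infDist x I.set / I.len)⁻¹

structure Tile where
  j : ℤ
  kt : ℤ
  kf : ℤ

def Tile.timeIv (P : Tile) : Iv := ⟨(2:ℝ)^P.j * P.kt, (2:ℝ)^P.j⟩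

def Tile.freqIv (β : ℝ) (P : Tile) : Iv :=
  ⟨(2:ℝ)^(-P.j) * ((P.kf : ℝ) + (-1:ℝ)^(-P.j) * β), (2:ℝ)^(-P.j)⟩

def Tile.lt' (β : ℝ) (P' P : Tile) : Prop :=
  (P'.timeIv).set ⊂ (P.timeIv).set ∧ (P.freqIv β).set ⊆ (P'.freqIv β).dil 3

def Tile.le' (β : ℝ) (P' P : Tile) : Prop := Tile.lt' β P' P ∨ P' = P

def Tile.lesim (β c : ℝ) (P' P : Tile) : Prop :=
  (P'.timeIv).set ⊆ (P.timeIv).set ∧ (P.freqIv β).set ⊆ (P'.freqIv β).dil c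

def Tile.lesim' (β c : ℝ) (P' P : Tile) : Prop :=
  Tile.lesim β c P' P ∧ ¬ Tile.le' β P' P

structure MultiTile (n : ℕ) where
  j : ℤ
  kt : ℤ
  kf : Fin n → ℤ

def MultiTile.tile {n : ℕ} (P : MultiTile n) (i : Fin n) : Tile := ⟨P.j, P.kt, P.kf i⟩

def MultiTile.timeIv {n : ℕ} (P : MultiTile n) : Iv := ⟨(2:ℝ)^P.j * P.kt, (2:ℝ)^P.j⟩

def MultiTile.freqCube {n : ℕ} (α : Fin n → ℝ) (P : MultiTile n) : Set (Fin n → ℝ) :=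
  {ξ | ∀ i, ξ i ∈ ((P.tile i).freqIv (α i)).set}

def HasRank (n k : ℕ) (α : Fin n → ℝ) (c₃ csmall : ℝ) (Ps : Finset (MultiTile n)) : Prop :=
  ∀ P ∈ Ps, ∀ P' ∈ Ps, ∀ ι : Fin k → Fin n, StrictMono ι →
    (∀ s, Tile.le' (α (ι s)) (MultiTile.tile P' (ι s)) (MultiTile.tile P (ι s))) →
    (∀ i, Tile.lesim (α i) c₃ (MultiTile.tile P' i) (MultiTile.tile P i)) ∧
    ((2:ℝ)^P'.j ≤ csmall * (2:ℝ)^P.j →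
      ∃ i i' : Fin n, i ≠ i' ∧ Tile.lesim' (α i) c₃ (MultiTile.tile P' i) (MultiTile.tile P i) ∧
        Tile.lesim' (α i') c₃ (MultiTile.tile P' i') (MultiTile.tile P i'))

def AdaptedBump (w : Iv) (Ca : ℕ → ℝ) (M : ℕ) (ψ : ℝ → ℂ) : Prop :=
  ContDiff ℝ (⊤ : ℕ∞) ψ ∧ (∀ ξ, ξ ∉ w.set → ψ ξ = 0) ∧ (∀ ξ ∈ w.dil (9/10), ψ ξ = 1) ∧
  ∀ a : ℕ, a ≤ M → ∀ ξ : ℝ, ‖iteratedDeriv a ψ ξ‖ ≤ Ca a / w.len ^ a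

def mulOp (ψ : ℝ → ℂ) (f : ℝ → ℂ) (x : ℝ) : ℂ :=
  ∫ ξ : ℝ, ψ ξ * 𝓕 f ξ * Complex.exp (2 * Real.pi * Complex.I * ξ * x)

def tileNorm (N : ℕ) (ψ : ℝ → ℂ) (P : Tile) (f : ℝ → ℂ) : ℝ :=
  ((2:ℝ)^P.j)⁻¹ * ∫ x : ℝ, ‖mulOp ψ f x‖ * (P.timeIv).chi x ^ (2*N)

def IsTree (n : ℕ) (α : Fin n → ℝ) (Ps T : Finset (MultiTile n)) (PT : MultiTile n)
    (jdx : Fin n) : Prop :=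
  PT ∈ Ps ∧ T ⊆ Ps ∧ ∀ P ∈ T, Tile.le' (α jdx) (MultiTile.tile P jdx) (MultiTile.tile PT jdx)

def treeNorm (n N : ℕ) (ψ : Fin n → Tile → ℝ → ℂ) (i : Fin n) (f : ℝ → ℂ)
    (T : Finset (MultiTile n)) : ℝ :=
  ⨆ P ∈ T, tileNorm N (ψ i (MultiTile.tile P i)) (MultiTile.tile P i) f

def treeSize (n N : ℕ) (α : Fin n → ℝ) (c₃ : ℝ) (ψ : Fin n → Tile → ℝ → ℂ)
    (i : Fin n) (f : ℝ → ℂ) (T : Finset (MultiTile n)) (PT : MultiTile n) : ℝ :=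
  Real.sqrt (((2:ℝ)^PT.j)⁻¹ * ∑ P ∈ T,
      if Tile.lesim' (α i) c₃ (MultiTile.tile P i) (MultiTile.tile PT i)
      then (2:ℝ)^P.j * tileNorm N (ψ i (MultiTile.tile P i)) (MultiTile.tile P i) f ^ 2 else 0)
    + treeNorm n N ψ i f T

def StronglyDisjoint (n : ℕ) (α : Fin n → ℝ) (i : Fin n)
    (T : Finset (MultiTile n)) (PT : MultiTile n)
    (T' : Finset (MultiTile n)) (PT' : MultiTile n) : Prop :=
  (∀ P ∈ T, ∀ P' ∈ T', MultiTile.tile P i ≠ MultiTile.tile P' i) ∧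
  (∀ P ∈ T, ∀ P' ∈ T',
    ((MultiTile.tile P i).freqIv (α i)).set ⊂ ((MultiTile.tile P' i).freqIv (α i)).set →
    (MultiTile.timeIv P').set ∩ (MultiTile.timeIv PT).set = ∅) ∧
  (∀ P ∈ T, ∀ P' ∈ T',
    ((MultiTile.tile P' i).freqIv (α i)).set ⊂ ((MultiTile.tile P i).freqIv (α i)).set →
    (MultiTile.timeIv P).set ∩ (MultiTile.timeIv PT').set = ∅)

def setDist {E : Type*} [PseudoMetricSpace E] (s t : Set E) : ℝ :=
  ⨅ x ∈ s, Metric.infDist x t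

/-- The (centered) Hardy–Littlewood maximal function of the indicator of `E`. -/
def maximalFn (E : Set ℝ) (x : ℝ) : ℝ≥0∞ :=
  ⨆ (r : ℝ) (_ : 0 < r), volume (E ∩ Set.Ioo (x - r) (x + r)) / ENNReal.ofReal (2 * r)

/-- The normalized average `λ(I) = (|I| |E'|)⁻¹ ∫_{E'} χ̃_I^N`. -/
def lamAvg (N : ℕ) (E' : Set ℝ) (I : Iv) : ℝ :=
  (∫ x in E', I.chi x ^ N) / (I.len * (volume E').toReal)


/-!
Let `d` be the distance from `E'ₙ` to `I` and `u = 1 + d / |I|`. Both kinds of averages are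
controlled through the layer-cake formula, since the superlevel set `{χ̃_I^N ≥ t}` lies in the
interval centred at any point `y` of radius `|I| t^{-1/N} + dist(y, I) + |I|`. On `E'ₙ` we
have `χ̃_I ≤ u⁻¹`, so only the levels `t ≤ u^{-N}` contribute and `λₙ(I) ≲ u^{1-N}`. For
`i < n`, centring at a point `x₀ ∈ E'ₙ` with `dist(x₀, I) < d + |I|` and using
`Mχ_{Eᵢ}(x₀) < C₀|Eᵢ|` gives `λᵢ(I) ≲ C₀ u`. Hence `1 + Σᵢ λᵢ(I) ≲ u`, and raising this to
the power `1 - N ≤ 0` concludes.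
-/

open Set Metric

lemma dist_le_infDist_add_diam_add_infDist {α : Type*} [PseudoMetricSpace α] {s : Set α}
    (hs : Bornology.IsBounded s) (hne : s.Nonempty) (x y : α) :
    dist x y ≤ infDist x s + diam s + infDist y s := by
  have h : dist x y - infDist x s - diam s ≤ infDist y s :=
    (le_infDist hne).2 fun z hz => by
      have := dist_le_infDist_add_diam (x := x) hs hz
      linarith [dist_triangle x z y, dist_comm y z]
  linarith

lemma exists_near_ciInf {α : Type*} {S : Set α} (hS : S.Nonempty) {f : α → ℝ}
    (hf : ∀ x, 0 ≤ f x) {ε : ℝ} (hε : 0 < ε) :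
    ∃ d, 0 ≤ d ∧ (∀ x ∈ S, d ≤ f x) ∧ ∃ x₀ ∈ S, f x₀ < d + ε := by
  have : Nonempty S := hS.to_subtype
  have hbdd : BddBelow (range fun x : S => f x) := ⟨0, by rintro _ ⟨x, rfl⟩; exact hf x⟩
  obtain ⟨⟨x₀, hx₀⟩, hlt⟩ := exists_lt_of_ciInf_lt (lt_add_of_pos_right (⨅ x : S, f x) hε)
  exact ⟨⨅ x : S, f x, le_ciInf fun x => hf x, fun x hx => ciInf_le hbdd ⟨x, hx⟩, x₀, hx₀, hlt⟩

lemma rpow_le_rpow_neg_mul_rpow {u b K p : ℝ} (hp : p ≤ 0) (hu : 0 < u) (hK : 0 < K)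
    (hb : 0 < b) (hbK : b ≤ K * u) : u ^ p ≤ K ^ (-p) * b ^ p := by
  have hKu : (K * u) ^ p ≤ b ^ p := Real.rpow_le_rpow_of_nonpos hb hbK hp
  rw [Real.mul_rpow hK.le hu.le] at hKu
  calc u ^ p = K ^ (-p) * (K ^ p * u ^ p) := by
        rw [← mul_assoc, ← Real.rpow_add hK, neg_add_cancel, Real.rpow_zero, one_mul]
    _ ≤ K ^ (-p) * b ^ p := by gcongr

lemma integral_le_setIntegral_of_measureReal_superlevel_le {α : Type*} [MeasurableSpace α]
    {μ : Measure α} [IsFiniteMeasure μ] {f : α → ℝ} {g : ℝ → ℝ} {M : ℝ} (hM : 0 ≤ M)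
    (hf : Measurable f) (hf0 : ∀ x, 0 ≤ f x) (hfM : ∀ᵐ x ∂μ, f x ≤ M)
    (hg : IntegrableOn g (Ioc 0 M)) (hfg : ∀ t ∈ Ioc 0 M, μ.real {x | t ≤ f x} ≤ g t) :
    ∫ x, f x ∂μ ≤ ∫ t in Ioc 0 M, g t := by
  have hfi : Integrable f μ :=
    Integrable.of_bound hf.aestronglyMeasurable M <| hfM.mono fun x hx => by
      rwa [Real.norm_of_nonneg (hf0 x)]
  rw [hfi.integral_eq_integral_Ioc_meas_le (.of_forall hf0) hfM]
  have hanti : Antitone fun t => μ.real {x | t ≤ f x} := fun s t hst =>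
    measureReal_mono fun x hx => hst.trans hx
  refine setIntegral_mono_on ?_ hg measurableSet_Ioc hfg
  exact (intervalIntegrable_iff_integrableOn_Ioc_of_le hM).1 hanti.intervalIntegrable

lemma integrableOn_rpow_neg_inv {N : ℕ} (hN : 2 ≤ N) (M : ℝ) :
    IntegrableOn (fun t : ℝ => t ^ (-(N : ℝ)⁻¹)) (Ioc 0 M) :=
  (intervalIntegral.intervalIntegrable_rpow' (neg_lt_neg <| inv_lt_one_of_one_lt₀ <| by
    exact_mod_cast hN)).1

lemma setIntegral_rpow_neg_inv_le {N : ℕ} (hN : 2 ≤ N) {M : ℝ} (hM : 0 ≤ M) :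
    ∫ t in Ioc 0 M, t ^ (-(N : ℝ)⁻¹) ≤ 2 * M ^ (1 - (N : ℝ)⁻¹) := by
  have hN' : (N : ℝ)⁻¹ ≤ 2⁻¹ := inv_anti₀ two_pos (by exact_mod_cast hN)
  have hexp : 0 < -(N : ℝ)⁻¹ + 1 := by linarith
  rw [← intervalIntegral.integral_of_le hM, integral_rpow (Or.inl (by linarith)),
    Real.zero_rpow hexp.ne', sub_zero, div_le_iff₀ hexp, neg_add_eq_sub]
  have := Real.rpow_nonneg hM (1 - (N : ℝ)⁻¹)
  nlinarith

namespace Iv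

variable {I : Iv} {N : ℕ}

lemma chi_pos (hL : 0 < I.len) (x : ℝ) : 0 < I.chi x := by
  unfold chi
  have := div_nonneg (infDist_nonneg (x := x) (s := I.set)) hL.le
  positivity

lemma measurable_chi : Measurable I.chi :=
  ((continuous_infDist_pt I.set).measurable.div_const _).const_add 1 |>.inv

lemma chi_le_inv_of_le_infDist (hL : 0 < I.len) {d x : ℝ} (hd : 0 ≤ d)
    (hx : d ≤ infDist x I.set) : I.chi x ≤ (1 + d / I.len)⁻¹ := by
  unfold chi
  gcongr

lemma chi_le_one (hL : 0 < I.len) (x : ℝ) : I.chi x ≤ 1 := by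
  simpa using chi_le_inv_of_le_infDist hL le_rfl (infDist_nonneg (x := x))

lemma isBounded_set : Bornology.IsBounded I.set := isBounded_Ioo _ _

lemma set_nonempty (hL : 0 < I.len) : I.set.Nonempty := nonempty_Ioo.2 (by linarith)

lemma diam_set (hL : 0 < I.len) : diam I.set = I.len := by
  rw [set, Real.diam_Ioo (by linarith)]
  ring

lemma one_add_infDist_div_le_of_le_chi_pow (hL : 0 < I.len) (hN : N ≠ 0) {t x : ℝ}
    (ht : 0 < t) (hx : t ≤ I.chi x ^ N) :
    1 + infDist x I.set / I.len ≤ t ^ (-(N : ℝ)⁻¹) := by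
  have hroot : t ^ (N : ℝ)⁻¹ ≤ I.chi x := by
    calc t ^ (N : ℝ)⁻¹ ≤ (I.chi x ^ N) ^ (N : ℝ)⁻¹ := by gcongr
      _ = I.chi x := Real.pow_rpow_inv_natCast (chi_pos hL x).le hN
  have hpos : 0 < 1 + infDist x I.set / I.len := by
    have := div_nonneg (infDist_nonneg (x := x) (s := I.set)) hL.le
    linarith
  rw [Real.rpow_neg ht.le, ← inv_inv (1 + _)]
  exact inv_anti₀ (Real.rpow_pos_of_pos ht _) hroot

lemma setOf_le_chi_pow_subset_Ioo (hL : 0 < I.len) (hN : N ≠ 0) {t : ℝ} (ht : 0 < t)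
    (y : ℝ) :
    {x | t ≤ I.chi x ^ N} ⊆
      Ioo (y - (I.len * t ^ (-(N : ℝ)⁻¹) + infDist y I.set + I.len))
        (y + (I.len * t ^ (-(N : ℝ)⁻¹) + infDist y I.set + I.len)) := by
  intro x hx
  have hdist := dist_le_infDist_add_diam_add_infDist isBounded_set (set_nonempty hL) x y
  have hx' := one_add_infDist_div_le_of_le_chi_pow hL hN ht hx
  rw [diam_set hL, Real.dist_eq] at hdist
  have : infDist x I.set ≤ I.len * (t ^ (-(N : ℝ)⁻¹) - 1) := by
    rw [← div_le_iff₀' hL]; linarith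
  have hlt : |x - y| < I.len * t ^ (-(N : ℝ)⁻¹) + infDist y I.set + I.len := by nlinarith
  rw [abs_lt] at hlt
  constructor <;> linarith

lemma integral_chi_pow_le {μ : Measure ℝ} [IsFiniteMeasure μ] (hL : 0 < I.len) (hN : 2 ≤ N)
    {M : ℝ} (hM0 : 0 ≤ M) (hM1 : M ≤ 1) (hχM : ∀ᵐ x ∂μ, I.chi x ^ N ≤ M) (y : ℝ) {A : ℝ}
    (hA : ∀ R, 0 < R → μ.real (Ioo (y - R) (y + R)) ≤ A * R) :
    ∫ x, I.chi x ^ N ∂μ ≤ A * (infDist y I.set + 3 * I.len) * M ^ (1 - (N : ℝ)⁻¹) := by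
  have hN0 : N ≠ 0 := by omega
  have hA0 : 0 ≤ A := by simpa using (measureReal_nonneg).trans (hA 1 one_pos)
  have hδ := infDist_nonneg (x := y) (s := I.set)
  have hr := integrableOn_rpow_neg_inv hN M
  have hMq : M ≤ M ^ (1 - (N : ℝ)⁻¹) := by
    have hq : 0 ≤ 1 - (N : ℝ)⁻¹ :=
      sub_nonneg.2 <| inv_le_one_of_one_le₀ <| by exact_mod_cast hN0.bot_lt
    simpa using Real.rpow_le_rpow_of_exponent_ge' hM0 hM1 hq (by simp : 1 - (N : ℝ)⁻¹ ≤ 1)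
  calc ∫ x, I.chi x ^ N ∂μ
      ≤ ∫ t in Ioc 0 M, A * (I.len * t ^ (-(N : ℝ)⁻¹) + (infDist y I.set + I.len)) := by
        refine integral_le_setIntegral_of_measureReal_superlevel_le hM0
          (measurable_chi.pow_const N) (fun x => pow_nonneg (chi_pos hL x).le N) hχM
          (((hr.const_mul _).add (integrableOn_const (by simp))).const_mul _) fun t ht => ?_
        rw [← add_assoc]
        exact (measureReal_mono (setOf_le_chi_pow_subset_Ioo hL hN0 ht.1 y)).trans
          (hA _ (by have := Real.rpow_pos_of_pos ht.1 (-(N : ℝ)⁻¹); positivity))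
    _ = A * (I.len * (∫ t in Ioc 0 M, t ^ (-(N : ℝ)⁻¹)) + (infDist y I.set + I.len) * M) := by
        rw [integral_const_mul, integral_add (hr.const_mul _) (integrableOn_const (by simp)),
          integral_const_mul, setIntegral_const, Real.volume_real_Ioc_of_le hM0, smul_eq_mul,
          sub_zero, mul_comm M]
    _ ≤ A * (I.len * (2 * M ^ (1 - (N : ℝ)⁻¹))
          + (infDist y I.set + I.len) * M ^ (1 - (N : ℝ)⁻¹)) := by
        gcongr
        exact setIntegral_rpow_neg_inv_le hN hM0
    _ = A * (infDist y I.set + 3 * I.len) * M ^ (1 - (N : ℝ)⁻¹) := by ring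

end Iv

lemma pos_of_maximalFn_lt {E : Set ℝ} {x C₀ : ℝ}
    (h : maximalFn E x < ENNReal.ofReal C₀ * volume E) : 0 < C₀ := by
  have hC₀ : ENNReal.ofReal C₀ ≠ 0 := by
    rintro h0
    simp [h0] at h
  exact ENNReal.ofReal_pos.1 (pos_iff_ne_zero.2 hC₀)

lemma measureReal_inter_Ioo_le_of_maximalFn_lt {E : Set ℝ} (hE : volume E ≠ ⊤) {x C₀ : ℝ}
    (h : maximalFn E x < ENNReal.ofReal C₀ * volume E) {r : ℝ} (hr : 0 < r) :
    volume.real (E ∩ Ioo (x - r) (x + r)) ≤ C₀ * volume.real E * (2 * r) := by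
  have hle : volume (E ∩ Ioo (x - r) (x + r)) / ENNReal.ofReal (2 * r) ≤ maximalFn E x :=
    le_iSup₂ (f := fun r (_ : 0 < r) =>
      volume (E ∩ Ioo (x - r) (x + r)) / ENNReal.ofReal (2 * r)) r hr
  have hmeas : volume (E ∩ Ioo (x - r) (x + r)) ≤
      ENNReal.ofReal C₀ * volume E * ENNReal.ofReal (2 * r) :=
    (ENNReal.div_le_iff_le_mul (.inl (by simp [hr])) (.inl ENNReal.ofReal_ne_top)).1
      (hle.trans h.le)
  have := ENNReal.toReal_mono (by finiteness) hmeas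
  rwa [ENNReal.toReal_mul, ENNReal.toReal_mul, ENNReal.toReal_ofReal (pos_of_maximalFn_lt h).le,
    ENNReal.toReal_ofReal (by positivity)] at this

section lamAvg

variable {I : Iv} {N : ℕ}

lemma lamAvg_nonneg (hL : 0 < I.len) (E : Set ℝ) : 0 ≤ lamAvg N E I :=
  div_nonneg (integral_nonneg fun x => pow_nonneg (I.chi_pos hL x).le N) (by positivity)

lemma lamAvg_le_of_maximalFn_lt (hL : 0 < I.len) (hN : 2 ≤ N) {E : Set ℝ} (hE : volume E ≠ ⊤)
    {x₀ C₀ : ℝ} (hx₀ : maximalFn E x₀ < ENNReal.ofReal C₀ * volume E) :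
    lamAvg N E I ≤ 2 * C₀ * (infDist x₀ I.set / I.len + 3) := by
  have : IsFiniteMeasure (volume.restrict E) := isFiniteMeasure_restrict.2 hE
  have hint := I.integral_chi_pow_le (μ := volume.restrict E) hL hN zero_le_one le_rfl
    (ae_of_all _ fun x => pow_le_one₀ (I.chi_pos hL x).le (I.chi_le_one hL x)) x₀
    (A := 2 * C₀ * volume.real E) fun R hR => by
      rw [measureReal_restrict_apply measurableSet_Ioo, inter_comm]
      linarith [measureReal_inter_Ioo_le_of_maximalFn_lt hE hx₀ hR]
  have hC₀ := pos_of_maximalFn_lt hx₀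
  have hδ : 0 ≤ infDist x₀ I.set / I.len := div_nonneg infDist_nonneg hL.le
  refine div_le_of_le_mul₀ (by positivity) (by positivity) ?_
  rw [Real.one_rpow, mul_one] at hint
  rw [← measureReal_def]
  refine hint.trans_eq ?_
  field_simp

lemma lamAvg_le_of_le_infDist (hL : 0 < I.len) (hN : 2 ≤ N) {S : Set ℝ} (hS : volume S ≤ 1)
    (hS' : 2⁻¹ ≤ volume S) {d : ℝ} (hd : 0 ≤ d) (hdS : ∀ x ∈ S, d ≤ infDist x I.set) :
    lamAvg N S I ≤ 12 * (1 + d / I.len) ^ (1 - (N : ℝ)) := by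
  set u := 1 + d / I.len
  have hu : 1 ≤ u := le_add_of_nonneg_right (div_nonneg hd hL.le)
  have hu0 : 0 < u := by linarith
  have hSfin : volume S ≠ ⊤ := (hS.trans_lt ENNReal.one_lt_top).ne
  have : IsFiniteMeasure (volume.restrict S) := isFiniteMeasure_restrict.2 hSfin
  have hχS : ∀ᵐ x ∂volume.restrict S, I.chi x ^ N ≤ u⁻¹ ^ N :=
    ae_restrict_of_ae_restrict_of_subset
      (fun x hx => pow_le_pow_left₀ (I.chi_pos hL x).le
        (I.chi_le_inv_of_le_infDist hL hd (hdS x hx)) N)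
      (ae_restrict_of_forall_mem (measurableSet_le (I.measurable_chi.pow_const N) measurable_const)
        fun x hx => hx)
  have hc : I.l + I.len / 2 ∈ I.set := by constructor <;> simp [hL]
  have hint := I.integral_chi_pow_le hL hN (by positivity) (pow_le_one₀ (by positivity)
    (inv_le_one_of_one_le₀ hu)) hχS (I.l + I.len / 2) (A := 2) fun R hR => by
      rw [measureReal_restrict_apply measurableSet_Ioo]
      refine (measureReal_mono inter_subset_left measure_Ioo_lt_top.ne).trans_eq ?_
      rw [Real.volume_real_Ioo_of_le (by linarith)]
      ring
  have hpow : (u⁻¹ ^ N) ^ (1 - (N : ℝ)⁻¹) = u ^ (1 - (N : ℝ)) := by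
    rw [← Real.rpow_natCast, ← Real.rpow_mul (by positivity), Real.inv_rpow hu0.le,
      ← Real.rpow_neg hu0.le]
    congr 1
    field_simp
    ring
  rw [infDist_zero_of_mem hc, hpow] at hint
  have hS1 : 2⁻¹ ≤ volume.real S := by
    rw [measureReal_def]
    simpa using ENNReal.toReal_mono hSfin hS'
  refine div_le_of_le_mul₀ (by positivity) (by positivity) (hint.trans ?_)
  rw [← measureReal_def]
  calc 2 * (0 + 3 * I.len) * u ^ (1 - (N : ℝ))
      = 12 * u ^ (1 - (N : ℝ)) * (I.len * 2⁻¹) := by ring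
    _ ≤ 12 * u ^ (1 - (N : ℝ)) * (I.len * volume.real S) := by gcongr

end lamAvg

/-- the exceptional-set estimate (Section 4, estimate (decay)):
`λₙ(I) ≲ (1 + λ₁(I) + ⋯ + λ_{n-1}(I))^{1-N}`. -/
theorem statement9 (n : ℕ) (hn : 2 ≤ n) (N : ℕ) (hN : 2 ≤ N) (C₀ : ℝ) :
    ∃ C : ℝ, ∀ E : Fin n → Set ℝ,
      (∀ i, MeasurableSet (E i)) → (∀ i, volume (E i) < ⊤) →
      volume (E ⟨n - 1, by omega⟩) = 1 →
      ∀ E' : Fin n → Set ℝ,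
        E' ⟨n - 1, by omega⟩ =
          {x ∈ E ⟨n - 1, by omega⟩ |
            ∀ i, maximalFn (E i) x < ENNReal.ofReal C₀ * volume (E i)} →
        (∀ i : Fin n, (i : ℕ) < n - 1 → E' i = E i) →
        2⁻¹ ≤ volume (E' ⟨n - 1, by omega⟩) →
        ∀ I : Iv, 0 < I.len →
          lamAvg N (E' ⟨n - 1, by omega⟩) I ≤
            C * (1 + ∑ i ∈ Finset.univ.filter (fun i : Fin n => (i : ℕ) < n - 1),
                lamAvg N (E' i) I) ^ ((1 : ℝ) - N) := by
  refine ⟨12 * (1 + 8 * n * C₀) ^ (-(1 - (N : ℝ))), ?_⟩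
  intro E _ hEfin hE1 E' hE'n hE'i hS I hL
  set last : Fin n := ⟨n - 1, by omega⟩
  have hS1 : volume (E' last) ≤ 1 := hE1 ▸ measure_mono (hE'n ▸ sep_subset _ _)
  have hSne : (E' last).Nonempty :=
    nonempty_of_measure_ne_zero (ne_of_gt (lt_of_lt_of_le (by norm_num) hS))
  obtain ⟨d, hd, hdS, x₀, hx₀S, hx₀d⟩ :=
    exists_near_ciInf hSne (fun x => infDist_nonneg (x := x) (s := I.set)) hL
  have hx₀ : ∀ i, maximalFn (E i) x₀ < ENNReal.ofReal C₀ * volume (E i) := (hE'n ▸ hx₀S).2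
  have hC₀ := pos_of_maximalFn_lt (hx₀ last)
  set u := 1 + d / I.len
  have hu : 1 ≤ u := le_add_of_nonneg_right (div_nonneg hd hL.le)
  have hlam : ∀ i ∈ Finset.univ.filter (fun i : Fin n => (i : ℕ) < n - 1),
      lamAvg N (E' i) I ≤ 8 * C₀ * u := by
    intro i hi
    rw [hE'i i (Finset.mem_filter.1 hi).2]
    refine (lamAvg_le_of_maximalFn_lt hL hN (hEfin i).ne (hx₀ i)).trans ?_
    have : infDist x₀ I.set / I.len < d / I.len + 1 := by
      rwa [div_add_one hL.ne', div_lt_div_iff_of_pos_right hL]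
    nlinarith
  set Λ := ∑ i ∈ Finset.univ.filter (fun i : Fin n => (i : ℕ) < n - 1), lamAvg N (E' i) I
  have hΛ : 1 + Λ ≤ (1 + 8 * n * C₀) * u := by
    have := (Finset.sum_le_card_nsmul _ _ _ hlam).trans (nsmul_le_nsmul_left (by positivity)
      ((Finset.card_filter_le _ _).trans (Finset.card_fin n).le))
    rw [nsmul_eq_mul] at this
    nlinarith
  calc lamAvg N (E' last) I
      ≤ 12 * u ^ (1 - (N : ℝ)) := lamAvg_le_of_le_infDist hL hN hS1 hS hd hdS
    _ ≤ 12 * ((1 + 8 * n * C₀) ^ (-(1 - (N : ℝ))) * (1 + Λ) ^ (1 - (N : ℝ))) := by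
      have hΛ0 : 0 ≤ Λ := Finset.sum_nonneg fun i _ => lamAvg_nonneg hL _
      have hN' : (2 : ℝ) ≤ N := by exact_mod_cast hN
      gcongr
      exact rpow_le_rpow_neg_mul_rpow (by linarith) (by linarith) (by positivity) (by linarith)
        hΛ
    _ = _ := by ring
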